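/- arXiv:2211.04093 — 2 statements merged into one kernel-verified Lean document; each statement's English description precedes it below -/
import Mathlib

section
/- Let X and Y be proper, geodesically complete, Gromov δ-hyperbolic, Busemann metric spaces, let ε > 0, R > 1/ε, and let α = (α^X, α^Y): [0,R] → X⋈Y be an ε-monotone continuous (k,c)-quasigeodesic segment. Then there exists a constant M depending only on X⋈Y, k and c such that the projections α^X: [0,R] → X and α^Y: [0,R] → Y are (4k, MεR)-quasigeodesic segments. -/
open Set Filter MeasureTheory
open scoped ENNReal

noncomputable section

/-- `Φ` is a `(k,c)`-quasi-isometry with respect to the explicit distance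
functions `dA` and `dB`. -/
def QIWith {A B : Type*} (dA : A → A → ℝ) (dB : B → B → ℝ) (k c : ℝ) (Φ : A → B) : Prop :=
  (∀ x x' : A, k⁻¹ * dA x x' - c ≤ dB (Φ x) (Φ x') ∧ dB (Φ x) (Φ x') ≤ k * dA x x' + c) ∧
    ∀ y : B, ∃ x : A, dB (Φ x) y ≤ c

/-- `γ` is a geodesic (parametrized by arclength) on the parameter set `s`,
with respect to the distance function `d`. -/
def IsGeodesicOnD {Z : Type*} (d : Z → Z → ℝ) (γ : ℝ → Z) (s : Set ℝ) : Prop :=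
  ∀ t ∈ s, ∀ u ∈ s, d (γ t) (γ u) = |t - u|

/-- `γ` is a geodesic parametrized proportionally to arclength on `s`. -/
def IsAffineGeodesicOnD {Z : Type*} (d : Z → Z → ℝ) (γ : ℝ → Z) (s : Set ℝ) : Prop :=
  ∃ c : ℝ, 0 ≤ c ∧ ∀ t ∈ s, ∀ u ∈ s, d (γ t) (γ u) = c * |t - u|

/-- Gromov hyperbolicity (four-point condition) for the distance function `d`. -/
def GromovHyperbolicD {Z : Type*} (d : Z → Z → ℝ) (δ : ℝ) : Prop :=
  ∀ x y z w : Z, d x y + d z w ≤ max (d x z + d y w) (d x w + d y z) + 2 * δ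

/-- Every two points are joined by a geodesic. -/
def GeodesicSpaceD {Z : Type*} (d : Z → Z → ℝ) : Prop :=
  ∀ x y : Z, ∃ γ : ℝ → Z, γ 0 = x ∧ γ (d x y) = y ∧ IsGeodesicOnD d γ (Icc 0 (d x y))

/-- Every geodesic segment extends to a bi-infinite geodesic line. -/
def GeodesicallyCompleteD {Z : Type*} (d : Z → Z → ℝ) : Prop :=
  ∀ (γ : ℝ → Z) (a b : ℝ), a ≤ b → IsGeodesicOnD d γ (Icc a b) →
    ∃ γ' : ℝ → Z, IsGeodesicOnD d γ' univ ∧ EqOn γ γ' (Icc a b)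

/-- Busemann convexity: the distance between any two geodesics parametrized
proportionally to arclength is a convex function. -/
def BusemannD {Z : Type*} (d : Z → Z → ℝ) : Prop :=
  ∀ (γ₁ γ₂ : ℝ → Z) (s : Set ℝ), Convex ℝ s →
    IsAffineGeodesicOnD d γ₁ s → IsAffineGeodesicOnD d γ₂ s →
    ConvexOn ℝ s fun t => d (γ₁ t) (γ₂ t)

/-- A proper, geodesically complete, Gromov `δ`-hyperbolic, Busemann metric space
together with a distinguished vertical geodesic ray `ray` from the base point
`ray 0`, determining a boundary point `a ∈ ∂X`. -/
structure HoroSpace (X : Type*) [MetricSpace X] where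
  δ : ℝ
  δ_nonneg : 0 ≤ δ
  proper : ProperSpace X
  hyperbolic : GromovHyperbolicD (fun x y : X => dist x y) δ
  geodesic : GeodesicSpaceD (fun x y : X => dist x y)
  geodComplete : GeodesicallyCompleteD (fun x y : X => dist x y)
  busemann : BusemannD (fun x y : X => dist x y)
  ray : ℝ → X
  ray_geodesic : IsGeodesicOnD (fun x y : X => dist x y) ray (Ici 0)

/-- The height function `h(x) = −limsup_{t→∞} (d(x, V_w(t)) − t)`
(the opposite of the Busemann function of the distinguished ray). -/
def HoroSpace.height {X : Type*} [MetricSpace X] (H : HoroSpace X) (x : X) : ℝ :=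
  - Filter.limsup (fun t : ℝ => dist x (H.ray t) - t) Filter.atTop

/-- The disk `D_r(p)` of radius `r` around `p` inside the horosphere through `p`. -/
def HoroSpace.disk {X : Type*} [MetricSpace X] (H : HoroSpace X) (r : ℝ) (p : X) : Set X :=
  {x : X | H.height x = H.height p ∧ dist x p ≤ r}

/-- The projection `π_z(A)`: points of the horosphere at height `z` whose upward
vertical geodesic ray meets `A`. -/
def HoroSpace.proj {X : Type*} [MetricSpace X] (H : HoroSpace X) (z : ℝ) (A : Set X) :
    Set X :=
  {x : X | H.height x = z ∧ ∃ γ : ℝ → X,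
      IsGeodesicOnD (fun a b : X => dist a b) γ (Ici z) ∧
      (∀ t ∈ Ici z, H.height (γ t) = t) ∧ γ z = x ∧ ∃ t ∈ Ici z, γ t ∈ A}

/-- The horospherical product `X ⋈ Y`: pairs whose heights add up to zero. -/
abbrev HoroProd {X Y : Type*} [MetricSpace X] [MetricSpace Y]
    (HX : HoroSpace X) (HY : HoroSpace Y) : Type _ :=
  {p : X × Y // HX.height p.1 + HY.height p.2 = 0}

/-- `V` is a vertical geodesic of `X ⋈ Y` on the parameter set `s`: a pair of
vertical geodesics of `X` and `Y` at opposite heights, parametrized by arclength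
by its height (up to orientation and an additive shift). -/
def IsVerticalOn {X Y : Type*} [MetricSpace X] [MetricSpace Y]
    (HX : HoroSpace X) (HY : HoroSpace Y)
    (V : ℝ → HoroProd HX HY) (s : Set ℝ) : Prop :=
  IsGeodesicOnD (fun a b : X => dist a b) (fun t => (V t).1.1) s ∧
  IsGeodesicOnD (fun a b : Y => dist a b) (fun t => (V t).1.2) s ∧
  ∀ t ∈ s, ∀ u ∈ s, |HX.height ((V t).1.1) - HX.height ((V u).1.1)| = |t - u|

/-- A distance `d_⋈` on `X ⋈ Y` induced by an admissible norm: the height is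
`1`-Lipschitz, `2·d_⋈ ≥ d_X + d_Y`, `d_⋈` agrees with
`d_X + d_Y − Δh` up to a bounded additive constant, and vertical geodesics of
`X ⋈ Y` are geodesics for `d_⋈`. -/
structure HoroMetric {X Y : Type*} [MetricSpace X] [MetricSpace Y]
    (HX : HoroSpace X) (HY : HoroSpace Y) where
  d : HoroProd HX HY → HoroProd HX HY → ℝ
  d_self : ∀ p, d p p = 0
  d_comm : ∀ p q, d p q = d q p
  d_triangle : ∀ p q r, d p r ≤ d p q + d q r
  eq_of_d : ∀ p q, d p q = 0 → p = q
  height_lip : ∀ p q, |HX.height p.1.1 - HX.height q.1.1| ≤ d p q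
  two_d_ge : ∀ p q, dist p.1.1 q.1.1 + dist p.1.2 q.1.2 ≤ 2 * d p q
  C : ℝ
  C_nonneg : 0 ≤ C
  approx : ∀ p q,
    |d p q - (dist p.1.1 q.1.1 + dist p.1.2 q.1.2 -
      |HX.height p.1.1 - HX.height q.1.1|)| ≤ C
  vertical_geodesic : ∀ (V : ℝ → HoroProd HX HY) (s : Set ℝ),
    IsVerticalOn HX HY V s → ∀ t ∈ s, ∀ u ∈ s, d (V t) (V u) = |t - u|

/-- `γ` is a `(k,c)`-quasigeodesic on the parameter set `s`. -/
def IsQGOn {Z : Type*} (d : Z → Z → ℝ) (k c : ℝ) (γ : ℝ → Z) (s : Set ℝ) : Prop :=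
  ∀ t ∈ s, ∀ u ∈ s,
    k⁻¹ * |t - u| - c ≤ d (γ t) (γ u) ∧ d (γ t) (γ u) ≤ k * |t - u| + c

/-- `γ` is continuous on `s` with respect to the distance function `d`. -/
def ContOnD {Z : Type*} (d : Z → Z → ℝ) (γ : ℝ → Z) (s : Set ℝ) : Prop :=
  ∀ t ∈ s, ∀ ε > (0 : ℝ), ∃ η > (0 : ℝ), ∀ u ∈ s, |u - t| < η → d (γ t) (γ u) < ε

/-- `γ : [a,b] → Z` is `ε`-monotone with respect to the height function `hgt`:
equal heights force parameters to be `ε·(b−a)`-close. -/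
def EpsMonotoneOn {Z : Type*} (hgt : Z → ℝ) (ε : ℝ) (γ : ℝ → Z) (a b : ℝ) : Prop :=
  ∀ t₁ ∈ Icc a b, ∀ t₂ ∈ Icc a b, hgt (γ t₁) = hgt (γ t₂) → |t₁ - t₂| ≤ ε * (b - a)

/-- The closed `r`-neighbourhood of `A` with respect to the distance function `d`. -/
def nbhdD {Z : Type*} (d : Z → Z → ℝ) (r : ℝ) (A : Set Z) : Set Z :=
  {p : Z | ∃ a ∈ A, d p a ≤ r}

/-!
The height `h ∘ α` is continuous, coarsely Lipschitz and `ε`-monotone, so on every subinterval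
`[t, u]` it never exceeds the larger of its endpoint values by more than `kεR + c` (and dually
for the opposite height in `Y`). In a hyperbolic space, a path of bounded speed that stays below
a horosphere joins its endpoints at distance at most their total depth below it, up to an error
logarithmic in its length: measured from far up the vertical ray, consecutive points have large
Gromov products, and the four-point condition loses only `δ` per bisection. Hence each projection
of `α|[t,u]` travels at most `|Δh| + O(εR)` plus a sublinear term. Feeding the bound for one
factor into `d_⋈ ≈ d_X + d_Y - |Δh|` and the quasigeodesic lower bound on `d_⋈` gives the lower
bound for the other; the upper bound is just `d_X, d_Y ≤ 2 d_⋈`.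
-/

open Topology

section Gromov

variable {Z : Type*} [MetricSpace Z] {δ : ℝ}

def gromovProduct (w x y : Z) : ℝ := (dist x w + dist y w - dist x y) / 2

lemma GromovHyperbolicD.min_gromovProduct_sub_le
    (hyp : GromovHyperbolicD (fun a b : Z => dist a b) δ) (w x y z : Z) :
    min (gromovProduct w x y) (gromovProduct w y z) - δ ≤ gromovProduct w x z := by
  have h := hyp x z y w
  have hxy := min_le_left (gromovProduct w x y) (gromovProduct w y z)
  have hyz := min_le_right (gromovProduct w x y) (gromovProduct w y z)
  simp only [gromovProduct] at hxy hyz ⊢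
  rcases max_cases (dist x y + dist z w) (dist x w + dist z y) with ⟨hm, -⟩ | ⟨hm, -⟩ <;>
    rw [hm] at h <;> linarith [dist_comm z y]

/-- Bisect the chain: each of the `m` levels costs one `δ` through the four-point condition. -/
lemma GromovHyperbolicD.le_gromovProduct_of_chain (hδ : 0 ≤ δ)
    (hyp : GromovHyperbolicD (fun a b : Z => dist a b) δ) (w : Z) {G : ℝ} :
    ∀ {m n : ℕ} (p : ℕ → Z), 0 < n → n ≤ 2 ^ m →
      (∀ i < n, G ≤ gromovProduct w (p i) (p (i + 1))) →
      G - δ * m ≤ gromovProduct w (p 0) (p n) := by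
  intro m
  induction m with
  | zero =>
    intro n p hn hnm hG
    obtain rfl : n = 1 := by simp at hnm; omega
    simpa using hG 0 one_pos
  | succ m ih =>
    intro n p hn hnm hG
    push_cast
    rcases le_or_gt n (2 ^ m) with hsmall | hsmall
    · nlinarith [ih p hn hsmall hG]
    · have hfirst := ih p (Nat.two_pow_pos m) le_rfl fun i hi => hG i (hi.trans hsmall)
      have hsecond := ih (n := n - 2 ^ m) (fun i => p (2 ^ m + i)) (by omega)
        (by rw [pow_succ] at hnm; omega)
        fun i hi => by simpa only [add_assoc] using hG (2 ^ m + i) (by omega)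
      rw [add_zero, Nat.add_sub_cancel' hsmall.le] at hsecond
      linarith [hyp.min_gromovProduct_sub_le w (p 0) (p (2 ^ m)) (p n), le_min hfirst hsecond]

end Gromov

namespace HoroSpace

variable {Z : Type*} [MetricSpace Z] (H : HoroSpace Z)

lemma antitoneOn_dist_ray_sub (p : Z) : AntitoneOn (fun T => dist p (H.ray T) - T) (Ici 0) := by
  intro a ha b hb hab
  have hr : dist (H.ray a) (H.ray b) = |a - b| := H.ray_geodesic a ha b hb
  rw [abs_sub_comm, abs_of_nonneg (sub_nonneg.2 hab)] at hr
  linarith [dist_triangle p (H.ray a) (H.ray b)]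

lemma tendsto_dist_ray_sub (p : Z) :
    Tendsto (fun T => dist p (H.ray T) - T) atTop (𝓝 (-H.height p)) := by
  set f := fun T => dist p (H.ray T) - T
  -- precomposing with `max · 0` makes `f` antitone on all of `ℝ`
  have hanti : Antitone (f ∘ fun T => max T 0) := fun a b hab =>
    H.antitoneOn_dist_ray_sub p (le_max_right a 0) (le_max_right b 0) (max_le_max hab le_rfl)
  have hbdd : BddBelow (range (f ∘ fun T => max T 0)) := by
    refine ⟨-dist p (H.ray 0), ?_⟩
    rintro _ ⟨T, rfl⟩
    have hr : dist (H.ray 0) (H.ray (max T 0)) = |0 - max T 0| :=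
      H.ray_geodesic _ self_mem_Ici _ (le_max_right T 0)
    rw [zero_sub, abs_neg, abs_of_nonneg (le_max_right T 0)] at hr
    simp only [Function.comp, f]
    linarith [dist_triangle (H.ray 0) p (H.ray (max T 0)), dist_comm p (H.ray 0)]
  have hf : Tendsto f atTop (𝓝 (⨅ T, (f ∘ fun T => max T 0) T)) :=
    (tendsto_atTop_ciInf hanti hbdd).congr' <|
      (eventually_ge_atTop 0).mono fun T hT => by simp [max_eq_left hT]
  rwa [HoroSpace.height, hf.limsup_eq, neg_neg]

lemma sub_height_le_dist_ray (p : Z) {T : ℝ} (hT : 0 ≤ T) : T - H.height p ≤ dist p (H.ray T) := by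
  have := le_of_tendsto (H.tendsto_dist_ray_sub p) <| (eventually_ge_atTop T).mono
    fun T' hT' => H.antitoneOn_dist_ray_sub p hT (hT.trans hT') hT'
  linarith

/-- Seen from `H.ray T`, consecutive points have Gromov product at least `T - Hm - D / 2`;
the chain lemma passes this on to the endpoints, and `T → ∞` turns distances to the ray into
heights. -/
lemma dist_le_of_chain {m n : ℕ} (hn : 0 < n) (hnm : n ≤ 2 ^ m) (q : ℕ → Z) {D Hm : ℝ}
    (hstep : ∀ i < n, dist (q i) (q (i + 1)) ≤ D) (hheight : ∀ i ≤ n, H.height (q i) ≤ Hm) :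
    dist (q 0) (q n) ≤ (Hm - H.height (q 0)) + (Hm - H.height (q n)) + D + 2 * H.δ * m := by
  have hT : ∀ T ≥ (0 : ℝ), dist (q 0) (q n) ≤
      ((dist (q 0) (H.ray T) - T) + (dist (q n) (H.ray T) - T)) + (2 * Hm + D + 2 * H.δ * m) := by
    intro T hT
    have hG : ∀ i < n, T - Hm - D / 2 ≤ gromovProduct (H.ray T) (q i) (q (i + 1)) := fun i hi => by
      unfold gromovProduct
      linarith [H.sub_height_le_dist_ray (q i) hT, H.sub_height_le_dist_ray (q (i + 1)) hT,
        hstep i hi, hheight i hi.le, hheight (i + 1) hi]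
    have := H.hyperbolic.le_gromovProduct_of_chain H.δ_nonneg (H.ray T) q hn hnm hG
    unfold gromovProduct at this
    linarith
  have hlim := ((H.tendsto_dist_ray_sub (q 0)).add (H.tendsto_dist_ray_sub (q n))).add_const
    (2 * Hm + D + 2 * H.δ * m)
  linarith [ge_of_tendsto hlim (eventually_atTop.2 ⟨0, hT⟩)]

/-- Sample `β` with spacing at most `1`: the `⌈u - t⌉₊ + 1` steps need
`Nat.log 2 (⌈u - t⌉₊ + 1) + 1` bisections in the chain lemma, whence the logarithmic error. -/
lemma dist_le_of_height_le_max {β : ℝ → Z} {t u κ ν B : ℝ} (htu : t ≤ u) (hκ : 0 ≤ κ)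
    (hspeed : ∀ s ∈ Icc t u, ∀ s' ∈ Icc t u, dist (β s) (β s') ≤ κ * |s - s'| + ν)
    (hheight : ∀ s ∈ Icc t u, H.height (β s) ≤ max (H.height (β t)) (H.height (β u)) + B) :
    dist (β t) (β u) ≤ |H.height (β t) - H.height (β u)| + 2 * B + κ + ν
      + 2 * H.δ * (Nat.log 2 (⌈u - t⌉₊ + 1) + 1) := by
  set n := ⌈u - t⌉₊ + 1 with hn
  have hn0 : (0 : ℝ) < n := by positivity
  set h := (u - t) / n
  have hh0 : 0 ≤ h := div_nonneg (sub_nonneg.2 htu) hn0.le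
  have hh1 : h ≤ 1 := (div_le_one hn0).2 (by push_cast [hn]; linarith [Nat.le_ceil (u - t)])
  have hnh : n * h = u - t := mul_div_cancel₀ _ hn0.ne'
  set σ : ℕ → ℝ := fun i => t + i * h
  have hσ : ∀ i ≤ n, σ i ∈ Icc t u := fun i hi => by
    have : (i : ℝ) * h ≤ n * h := mul_le_mul_of_nonneg_right (by exact_mod_cast hi) hh0
    exact ⟨le_add_of_nonneg_right (by positivity), by simp only [σ]; linarith⟩
  have hstep : ∀ i < n, dist (β (σ i)) (β (σ (i + 1))) ≤ κ + ν := fun i hi => by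
    have hd : |σ i - σ (i + 1)| = h := by
      simp only [σ]; push_cast
      rw [show t + i * h - (t + (i + 1) * h) = -h by ring, abs_neg, abs_of_nonneg hh0]
    have := hspeed _ (hσ i hi.le) _ (hσ (i + 1) hi)
    rw [hd] at this
    nlinarith
  have hchain := H.dist_le_of_chain (n := n) (by omega) (Nat.lt_pow_succ_log_self one_lt_two n).le
    (fun i => β (σ i)) hstep fun i hi => hheight _ (hσ i hi)
  have hσ0 : σ 0 = t := by simp [σ]
  have hσn : σ n = u := by simp only [σ]; linarith
  rw [hσ0, hσn] at hchain
  push_cast at hchain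
  linarith [max_sub_min_eq_abs' (H.height (β t)) (H.height (β u)),
    min_add_max (H.height (β t)) (H.height (β u))]

end HoroSpace

lemma natLog_two_le_add_div_pow (q j : ℕ) : (Nat.log 2 q : ℝ) ≤ j + q / 2 ^ j := by
  rcases le_or_gt (Nat.log 2 q) j with h | h
  · exact le_add_of_le_of_nonneg (by exact_mod_cast h) (by positivity)
  obtain ⟨r, hr⟩ := Nat.exists_eq_add_of_le h.le
  have hq : q ≠ 0 := by rintro rfl; simp at h
  have hpow : r * 2 ^ j ≤ q := calc
    r * 2 ^ j ≤ 2 ^ r * 2 ^ j := Nat.mul_le_mul_right _ Nat.lt_two_pow_self.le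
    _ ≤ 2 ^ Nat.log 2 q := by rw [← pow_add, hr]; exact Nat.pow_le_pow_right two_pos (by omega)
    _ ≤ q := Nat.pow_log_le_self 2 hq
  have : (r : ℝ) ≤ q / 2 ^ j := by rw [le_div_iff₀ (by positivity)]; exact_mod_cast hpow
  rw [hr]; push_cast; linarith

lemma exists_mul_natLog_ceil_le {d a : ℝ} (hd : 0 ≤ d) (ha : 0 < a) :
    ∃ K, 0 ≤ K ∧ ∀ x : ℝ, 0 ≤ x → d * (Nat.log 2 (⌈x⌉₊ + 1) + 1) ≤ a * x + K := by
  obtain ⟨j, hj⟩ := pow_unbounded_of_one_lt (d / a) one_lt_two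
  have hdj : d / 2 ^ j ≤ a := by
    rw [div_lt_iff₀ ha] at hj
    rw [div_le_iff₀ (by positivity)]
    linarith
  refine ⟨d * j + 2 * a + d, by positivity, fun x hx => ?_⟩
  have hq : ((⌈x⌉₊ + 1 : ℕ) : ℝ) ≤ x + 2 := by push_cast; linarith [Nat.ceil_lt_add_one hx]
  calc d * (Nat.log 2 (⌈x⌉₊ + 1) + 1)
      ≤ d * (j + ((⌈x⌉₊ + 1 : ℕ) : ℝ) / 2 ^ j + 1) := by
        gcongr; exact natLog_two_le_add_div_pow _ j
    _ = d * j + d / 2 ^ j * ((⌈x⌉₊ + 1 : ℕ) : ℝ) + d := by ring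
    _ ≤ d * j + a * (x + 2) + d := by gcongr
    _ = a * x + (d * j + 2 * a + d) := by ring

/-- Otherwise `φ` would take the value `max (φ t) (φ u)` on both sides of the peak, at points
too far apart. -/
lemma le_max_add_of_levelSet_diam_le {φ : ℝ → ℝ} {a b r B : ℝ} (hφ : ContinuousOn φ (Icc a b))
    (hlevel : ∀ s ∈ Icc a b, ∀ s' ∈ Icc a b, φ s = φ s' → |s - s'| ≤ r)
    (hosc : ∀ s ∈ Icc a b, ∀ s' ∈ Icc a b, |s - s'| ≤ r → |φ s - φ s'| ≤ B)
    {t s u : ℝ} (hat : a ≤ t) (hts : t ≤ s) (hsu : s ≤ u) (hub : u ≤ b) :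
    φ s ≤ max (φ t) (φ u) + B := by
  have hs : s ∈ Icc a b := ⟨hat.trans hts, hsu.trans hub⟩
  have hB : 0 ≤ B := (abs_nonneg _).trans (hosc s hs s hs (by simpa using hlevel s hs s hs rfl))
  by_contra! hpeak
  obtain ⟨s₁, hs₁, h₁⟩ := intermediate_value_Icc hts (hφ.mono (Icc_subset_Icc hat hs.2))
    ⟨le_max_left _ _, by linarith⟩
  obtain ⟨s₂, hs₂, h₂⟩ := intermediate_value_Icc' hsu (hφ.mono (Icc_subset_Icc hs.1 hub))
    ⟨le_max_right _ _, by linarith⟩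
  have hs₁' : s₁ ∈ Icc a b := ⟨hat.trans hs₁.1, hs₁.2.trans hs.2⟩
  have hs₂' : s₂ ∈ Icc a b := ⟨hs.1.trans hs₂.1, hs₂.2.trans hub⟩
  have hfar := hlevel s₁ hs₁' s₂ hs₂' (h₁.trans h₂.symm)
  rw [abs_sub_comm, abs_of_nonneg (by linarith [hs₁.2, hs₂.1])] at hfar
  have hclose : |s - s₁| ≤ r := by rw [abs_of_nonneg (by linarith [hs₁.2])]; linarith [hs₂.1]
  have := hosc s hs s₁ hs₁' hclose
  rw [h₁] at this
  linarith [le_abs_self (φ s - max (φ t) (φ u))]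

lemma IsQGOn.of_le {Z : Type*} {d : Z → Z → ℝ} (hd : ∀ x y, d x y = d y x) {k c : ℝ}
    {γ : ℝ → Z} {s : Set ℝ}
    (h : ∀ t ∈ s, ∀ u ∈ s, t ≤ u →
      k⁻¹ * (u - t) - c ≤ d (γ t) (γ u) ∧ d (γ t) (γ u) ≤ k * (u - t) + c) :
    IsQGOn d k c γ s := by
  intro t ht u hu
  rcases le_total t u with htu | hut
  · rw [abs_sub_comm, abs_of_nonneg (sub_nonneg.2 htu)]
    exact h t ht u hu htu
  · rw [abs_of_nonneg (sub_nonneg.2 hut), hd]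
    exact h u hu t ht hut

section HoroProd

variable {X Y : Type*} [MetricSpace X] [MetricSpace Y] {HX : HoroSpace X} {HY : HoroSpace Y}

lemma HoroProd.height_snd (p : HoroProd HX HY) : HY.height p.1.2 = -HX.height p.1.1 := by
  linarith [p.2]

lemma HoroProd.abs_height_snd_sub (p q : HoroProd HX HY) :
    |HY.height p.1.2 - HY.height q.1.2| = |HX.height p.1.1 - HX.height q.1.1| := by
  rw [p.height_snd, q.height_snd, ← abs_neg]
  ring_nf

namespace HoroMetric

variable (P : HoroMetric HX HY)

lemma dist_fst_le (p q : HoroProd HX HY) : dist p.1.1 q.1.1 ≤ 2 * P.d p q := by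
  linarith [P.two_d_ge p q, dist_nonneg (x := p.1.2) (y := q.1.2)]

lemma dist_snd_le (p q : HoroProd HX HY) : dist p.1.2 q.1.2 ≤ 2 * P.d p q := by
  linarith [P.two_d_ge p q, dist_nonneg (x := p.1.1) (y := q.1.1)]

variable {P} {α : ℝ → HoroProd HX HY} {k c ε R : ℝ}

lemma continuousOn_height {s : Set ℝ} (hα : ContOnD P.d α s) :
    ContinuousOn (fun t => HX.height (α t).1.1) s := by
  refine Metric.continuousOn_iff.2 fun t ht η hη => ?_
  obtain ⟨ρ, hρ, hclose⟩ := hα t ht η hη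
  refine ⟨ρ, hρ, fun u hu htu => ?_⟩
  rw [Real.dist_eq, abs_sub_comm]
  exact (P.height_lip (α t) (α u)).trans_lt (hclose u hu (by rwa [← Real.dist_eq]))

lemma abs_height_sub_le {s : Set ℝ} (hα : IsQGOn P.d k c α s) {t u : ℝ} (ht : t ∈ s) (hu : u ∈ s) :
    |HX.height (α t).1.1 - HX.height (α u).1.1| ≤ k * |t - u| + c :=
  (P.height_lip _ _).trans (hα t ht u hu).2

section

variable (hcont : ContOnD P.d α (Icc 0 R)) (hqg : IsQGOn P.d k c α (Icc 0 R))
  (hmono : EpsMonotoneOn (fun p : HoroProd HX HY => HX.height p.1.1) ε α 0 R) (hk : 0 ≤ k)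
include hcont hqg hmono hk

lemma height_fst_le_max {t s u : ℝ} (ht : 0 ≤ t) (hts : t ≤ s) (hsu : s ≤ u) (hu : u ≤ R) :
    HX.height (α s).1.1 ≤ max (HX.height (α t).1.1) (HX.height (α u).1.1) + (k * (ε * R) + c) :=
  le_max_add_of_levelSet_diam_le (continuousOn_height hcont)
    (fun s hs s' hs' h => by simpa using hmono s hs s' hs' h)
    (fun s hs s' hs' h => (abs_height_sub_le hqg hs hs').trans (by gcongr)) ht hts hsu hu

lemma height_snd_le_max {t s u : ℝ} (ht : 0 ≤ t) (hts : t ≤ s) (hsu : s ≤ u) (hu : u ≤ R) :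
    HY.height (α s).1.2 ≤ max (HY.height (α t).1.2) (HY.height (α u).1.2) + (k * (ε * R) + c) := by
  simp only [HoroProd.height_snd]
  refine le_max_add_of_levelSet_diam_le (continuousOn_height hcont).neg
    (fun s hs s' hs' h => by simpa using hmono s hs s' hs' (neg_inj.1 h))
    (fun s hs s' hs' h => ?_) ht hts hsu hu
  rw [Pi.neg_apply, Pi.neg_apply, neg_sub_neg, abs_sub_comm]
  exact (abs_height_sub_le hqg hs hs').trans (by gcongr)

lemma dist_fst_le_abs_height_sub {t u : ℝ} (ht : 0 ≤ t) (htu : t ≤ u) (hu : u ≤ R) :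
    dist (α t).1.1 (α u).1.1 ≤ |HX.height (α t).1.1 - HX.height (α u).1.1|
      + 2 * (k * (ε * R) + c) + 2 * k + 2 * c + 2 * HX.δ * (Nat.log 2 (⌈u - t⌉₊ + 1) + 1) :=
  HX.dist_le_of_height_le_max htu (by positivity)
    (fun s hs s' hs' => (P.dist_fst_le _ _).trans
      (by linarith [(hqg s ⟨ht.trans hs.1, hs.2.trans hu⟩ s' ⟨ht.trans hs'.1, hs'.2.trans hu⟩).2]))
    fun s hs => height_fst_le_max hcont hqg hmono hk ht hs.1 hs.2 hu

lemma dist_snd_le_abs_height_sub {t u : ℝ} (ht : 0 ≤ t) (htu : t ≤ u) (hu : u ≤ R) :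
    dist (α t).1.2 (α u).1.2 ≤ |HX.height (α t).1.1 - HX.height (α u).1.1|
      + 2 * (k * (ε * R) + c) + 2 * k + 2 * c + 2 * HY.δ * (Nat.log 2 (⌈u - t⌉₊ + 1) + 1) := by
  rw [← HoroProd.abs_height_snd_sub]
  exact HY.dist_le_of_height_le_max htu (by positivity)
    (fun s hs s' hs' => (P.dist_snd_le _ _).trans
      (by linarith [(hqg s ⟨ht.trans hs.1, hs.2.trans hu⟩ s' ⟨ht.trans hs'.1, hs'.2.trans hu⟩).2]))
    fun s hs => height_snd_le_max hcont hqg hmono hk ht hs.1 hs.2 hu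

end

lemma le_dist_fst_and_le_dist_snd (hcont : ContOnD P.d α (Icc 0 R))
    (hqg : IsQGOn P.d k c α (Icc 0 R))
    (hmono : EpsMonotoneOn (fun p : HoroProd HX HY => HX.height p.1.1) ε α 0 R) (hk : 0 < k)
    {K : ℝ} (hK : ∀ x : ℝ, 0 ≤ x →
      2 * max HX.δ HY.δ * (Nat.log 2 (⌈x⌉₊ + 1) + 1) ≤ 3 / (4 * k) * x + K)
    {t u : ℝ} (ht : t ∈ Icc 0 R) (hu : u ∈ Icc 0 R) (htu : t ≤ u) :
    (4 * k)⁻¹ * (u - t) - (5 * c + P.C + 2 * k + K + 2 * k * (ε * R)) ≤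
        dist (α t).1.1 (α u).1.1 ∧
      (4 * k)⁻¹ * (u - t) - (5 * c + P.C + 2 * k + K + 2 * k * (ε * R)) ≤
        dist (α t).1.2 (α u).1.2 := by
  have hX := dist_fst_le_abs_height_sub hcont hqg hmono hk.le ht.1 htu hu.2
  have hY := dist_snd_le_abs_height_sub hcont hqg hmono hk.le ht.1 htu hu.2
  have hlog := hK (u - t) (sub_nonneg.2 htu)
  have hδX : 2 * HX.δ * (Nat.log 2 (⌈u - t⌉₊ + 1) + 1 : ℝ) ≤
      2 * max HX.δ HY.δ * (Nat.log 2 (⌈u - t⌉₊ + 1) + 1) := by gcongr; exact le_max_left _ _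
  have hδY : 2 * HY.δ * (Nat.log 2 (⌈u - t⌉₊ + 1) + 1 : ℝ) ≤
      2 * max HX.δ HY.δ * (Nat.log 2 (⌈u - t⌉₊ + 1) + 1) := by gcongr; exact le_max_right _ _
  have happrox := abs_le.1 (P.approx (α t) (α u))
  have hqgtu := (hqg t ht u hu).1
  rw [abs_sub_comm, abs_of_nonneg (sub_nonneg.2 htu)] at hqgtu
  have hinv : k⁻¹ * (u - t) = (4 * k)⁻¹ * (u - t) + 3 / (4 * k) * (u - t) := by field_simp; ring
  constructor <;> linarith

end HoroMetric

end HoroProd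

/-- The projections `α^X` and `α^Y` of an `ε`-monotone
continuous `(k,c)`-quasigeodesic segment `α : [0,R] → X ⋈ Y` (with `R > 1/ε`)
are `(4k, MεR)`-quasigeodesic segments, where `M` depends only on `X ⋈ Y`,
`k` and `c`. -/
theorem statement_6 {X Y : Type*} [MetricSpace X] [MetricSpace Y]
    (HX : HoroSpace X) (HY : HoroSpace Y) (P : HoroMetric HX HY)
    (k c : ℝ) (hk : 1 ≤ k) (hc : 0 ≤ c) :
    ∃ M : ℝ, 0 < M ∧ ∀ ε R : ℝ, 0 < ε → 1 / ε < R →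
      ∀ α : ℝ → HoroProd HX HY,
        ContOnD P.d α (Icc 0 R) →
        IsQGOn P.d k c α (Icc 0 R) →
        EpsMonotoneOn (fun p : HoroProd HX HY => HX.height p.1.1) ε α 0 R →
        IsQGOn (fun a b : X => dist a b) (4 * k) (M * ε * R)
            (fun t => (α t).1.1) (Icc 0 R) ∧
        IsQGOn (fun a b : Y => dist a b) (4 * k) (M * ε * R)
            (fun t => (α t).1.2) (Icc 0 R) := by
  have hk0 : 0 < k := by linarith
  -- the logarithmic error eats `3 / (4k)` of the slope `k⁻¹`, leaving `(4k)⁻¹`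
  obtain ⟨K, hK0, hK⟩ := exists_mul_natLog_ceil_le (d := 2 * max HX.δ HY.δ) (a := 3 / (4 * k))
    (by have := HX.δ_nonneg; positivity) (by positivity)
  refine ⟨5 * c + P.C + 4 * k + K, by linarith [P.C_nonneg], fun ε R hε hR α hcont hqg hmono => ?_⟩
  have hεR : 1 < ε * R := by rwa [div_lt_iff₀ hε, mul_comm] at hR
  have hM : 5 * c + P.C + 2 * k + K ≤ (5 * c + P.C + 2 * k + K) * (ε * R) :=
    le_mul_of_one_le_right (by linarith [P.C_nonneg]) hεR.le
  have hupper : ∀ t ∈ Icc 0 R, ∀ u ∈ Icc 0 R, t ≤ u → 2 * P.d (α t) (α u) ≤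
      4 * k * (u - t) + (5 * c + P.C + 4 * k + K) * ε * R := fun t ht u hu htu => by
    have hd := (hqg t ht u hu).2
    rw [abs_sub_comm, abs_of_nonneg (sub_nonneg.2 htu)] at hd
    have hkεR : 0 ≤ k * (ε * R) := by positivity
    linarith [mul_nonneg hk0.le (sub_nonneg.2 htu), P.C_nonneg]
  refine ⟨IsQGOn.of_le dist_comm fun t ht u hu htu => ⟨?_, ?_⟩,
    IsQGOn.of_le dist_comm fun t ht u hu htu => ⟨?_, ?_⟩⟩
  · linarith [(HoroMetric.le_dist_fst_and_le_dist_snd hcont hqg hmono hk0 hK ht hu htu).1]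
  · linarith [P.dist_fst_le (α t) (α u), hupper t ht u hu htu]
  · linarith [(HoroMetric.le_dist_fst_and_le_dist_snd hcont hqg hmono hk0 hK ht hu htu).2]
  · linarith [P.dist_snd_le (α t) (α u), hupper t ht u hu htu]
end
end

section
/- Let X and Y be proper, geodesically complete, Gromov δ-hyperbolic, Busemann metric spaces and let k ≥ 1, c ≥ 0, ε > 0. There exist a constant M depending only on k, c, X⋈Y and ε, and a constant c₀ > 0 depending only on k, c and X⋈Y, such that for all r ≥ M, all integers N ≥ M, and every continuous (k,c)-quasigeodesic segment α: [0,r] → X⋈Y that is not ε-monotone, one has Σ_{j=0}^{N−1} |h(α(jr/N)) − h(α((j+1)r/N))| − |h(α(0)) − h(α(r))| ≥ c₀·ε·r. -/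
open Set Filter MeasureTheory
open scoped ENNReal

noncomputable section

/-!
Let `t₁ < t₂` be parameters at which `α` has the same height, with `t₂ - t₁ > ε r`. Cut
`[t₁, t₂]` into `n ≤ 2^m` steps of length at most one, `m ≈ log₂ r`. In each factor the Gromov
product based at the boundary point satisfies `(x|y) ≥ min ((x|w), (w|y)) - δ`, so along this
chain it loses at most `δ m`; since the heights of the chain stay in a slab `[S, T]`, this bounds
`d_X + d_Y` between `α t₁` and `α t₂` by `2 (T - S) + O(1) + O(log r)`. The quasigeodesic lower
bound forces `T - S ≳ (t₂ - t₁) / (2k)`, so `α` climbs up to `T` and down to `S` between two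
visits of the same height. A grid of mesh `r / N` sees both excursions up to `O(k r / N)`, and
each costs twice its size in the sum of height differences beyond `|h(α 0) - h(α r)|`.
-/

open Topology

namespace HoroSpace

variable {Z : Type*} [MetricSpace Z] (H : HoroSpace Z)

/-- The Gromov product based at the boundary point of `H.ray`: the Busemann function
`-H.height` replaces the distance to a base point. -/
def gromovProduct (x y : Z) : ℝ := -(H.height x + H.height y + dist x y) / 2

theorem tendsto_height (x : Z) :
    Tendsto (fun t => t - dist x (H.ray t)) atTop (𝓝 (H.height x)) := by
  set f : ℝ → ℝ := fun t => t - dist x (H.ray t)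
  have hmono : Monotone fun t => f (max t 0) := by
    intro a b hab
    have hray := H.ray_geodesic (max a 0) (le_max_right a 0) (max b 0) (le_max_right b 0)
    rw [abs_sub_comm, abs_of_nonneg (sub_nonneg.2 (max_le_max_right 0 hab))] at hray
    have htri := dist_triangle x (H.ray (max a 0)) (H.ray (max b 0))
    simp only [f]
    linarith
  have hbdd : BddAbove (range fun t => f (max t 0)) := by
    refine ⟨dist x (H.ray 0), ?_⟩
    rintro _ ⟨t, rfl⟩
    have hray := H.ray_geodesic 0 self_mem_Ici (max t 0) (le_max_right t 0)
    rw [zero_sub, abs_neg, abs_of_nonneg (le_max_right t 0)] at hray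
    have htri := dist_triangle (H.ray 0) x (H.ray (max t 0))
    simp only [f]
    linarith [dist_comm x (H.ray 0)]
  have hlim : Tendsto f atTop (𝓝 (⨆ t, f (max t 0))) :=
    (tendsto_atTop_ciSup hmono hbdd).congr' <| by
      filter_upwards [eventually_ge_atTop 0] with t ht
      simp only [max_eq_left ht]
  have hneg : Tendsto (fun t => dist x (H.ray t) - t) atTop (𝓝 (-⨆ t, f (max t 0))) := by
    simpa [f, neg_sub] using hlim.neg
  rwa [height, hneg.limsup_eq, neg_neg]

/-- The four-point condition with the fourth point sent to the boundary along `H.ray`. -/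
theorem min_gromovProduct_sub_le (x y w : Z) :
    min (H.gromovProduct x w) (H.gromovProduct w y) - H.δ ≤ H.gromovProduct x y := by
  have hfour : ∀ t : ℝ, (t - dist x (H.ray t)) + (t - dist y (H.ray t)) + dist x y ≤
      max ((t - dist x (H.ray t)) + (t - dist w (H.ray t)) + dist x w)
        ((t - dist w (H.ray t)) + (t - dist y (H.ray t)) + dist w y) + 2 * H.δ := by
    intro t
    have h := H.hyperbolic x y w (H.ray t)
    rw [← sub_le_iff_le_add, le_max_iff] at h ⊢
    rcases h with h | h
    · left; linarith
    · right; linarith [dist_comm w y]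
  have hx := H.tendsto_height x
  have hy := H.tendsto_height y
  have hw := H.tendsto_height w
  have hlim := le_of_tendsto_of_tendsto' (((hx.add hy).add_const _))
    ((((hx.add hw).add_const _).max ((hw.add hy).add_const _)).add_const _) hfour
  simp only [gromovProduct]
  rcases max_choice (H.height x + H.height w + dist x w) (H.height w + H.height y + dist w y)
    with h | h <;> rw [h] at hlim
  · linarith [min_le_left (-(H.height x + H.height w + dist x w) / 2)
      (-(H.height w + H.height y + dist w y) / 2)]
  · linarith [min_le_right (-(H.height x + H.height w + dist x w) / 2)
      (-(H.height w + H.height y + dist w y) / 2)]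

theorem gromovProduct_chain {m n : ℕ} (hn : 1 ≤ n) (hnm : n ≤ 2 ^ m) (w : ℕ → Z) {S : ℝ}
    (hS : ∀ i < n, S ≤ H.gromovProduct (w i) (w (i + 1))) :
    S - H.δ * m ≤ H.gromovProduct (w 0) (w n) := by
  induction m generalizing n w with
  | zero =>
    obtain rfl : n = 1 := by simp only [pow_zero] at hnm; omega
    simpa using hS 0 one_pos
  | succ m ih =>
    by_cases hn' : n ≤ 2 ^ m
    · have := ih hn hn' w hS
      push_cast
      nlinarith [H.δ_nonneg]
    · have h₁ := ih Nat.one_le_two_pow le_rfl w fun i hi => hS i (by omega)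
      have h₂ := ih (n := n - 2 ^ m) (by omega) (by rw [pow_succ] at hnm; omega)
        (fun i => w (2 ^ m + i)) fun i hi => by
          simpa [Nat.add_assoc] using hS (2 ^ m + i) (by omega)
      simp only [add_zero, Nat.add_sub_cancel' (le_of_not_ge hn')] at h₂
      have := H.min_gromovProduct_sub_le (w 0) (w n) (w (2 ^ m))
      push_cast
      linarith [le_min h₁ h₂]

end HoroSpace

theorem IsQGOn.mono {Z : Type*} {d : Z → Z → ℝ} {k c : ℝ} {γ : ℝ → Z} {s t : Set ℝ}
    (h : IsQGOn d k c γ t) (hst : s ⊆ t) : IsQGOn d k c γ s :=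
  fun x hx y hy => h x (hst hx) y (hst hy)

theorem exists_sub_gt_of_not_epsMonotoneOn {Z : Type*} {hgt : Z → ℝ} {ε a b : ℝ} {γ : ℝ → Z}
    (h : ¬EpsMonotoneOn hgt ε γ a b) :
    ∃ t₁ ∈ Icc a b, ∃ t₂ ∈ Icc a b, hgt (γ t₁) = hgt (γ t₂) ∧ ε * (b - a) < t₂ - t₁ := by
  simp only [EpsMonotoneOn, not_forall, not_le, exists_prop] at h
  obtain ⟨s₁, hs₁, s₂, hs₂, hs, hfar⟩ := h
  rcases le_total s₁ s₂ with h12 | h21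
  · exact ⟨s₁, hs₁, s₂, hs₂, hs, by rwa [abs_sub_comm, abs_of_nonneg (sub_nonneg.2 h12)] at hfar⟩
  · exact ⟨s₂, hs₂, s₁, hs₁, hs.symm, by rwa [abs_of_nonneg (sub_nonneg.2 h21)] at hfar⟩

theorem abs_sub_add_sum_le_sum (g : ℕ → ℝ) {a b c : ℕ} (hab : a ≤ b) (hbc : b ≤ c) :
    |g a - g b| + ∑ j ∈ Finset.Ico b c, |g j - g (j + 1)| ≤
      ∑ j ∈ Finset.Ico a c, |g j - g (j + 1)| := by
  rw [← Finset.sum_Ico_consecutive _ hab hbc]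
  gcongr
  calc |g a - g b| = |∑ j ∈ Finset.Ico a b, (g (j + 1) - g j)| := by
        rw [Finset.sum_Ico_sub _ hab, abs_sub_comm]
    _ ≤ ∑ j ∈ Finset.Ico a b, |g (j + 1) - g j| := Finset.abs_sum_le_sum_abs _ _
    _ = ∑ j ∈ Finset.Ico a b, |g j - g (j + 1)| := by simp only [abs_sub_comm]

theorem two_mul_abs_sub_sub_le_sum_abs_sub (g : ℕ → ℝ) {N j₀ j₁ j₂ j₃ : ℕ} (h₀₁ : j₀ ≤ j₁)
    (h₀₂ : j₀ ≤ j₂) (h₁₃ : j₁ ≤ j₃) (h₂₃ : j₂ ≤ j₃) (h₃ : j₃ ≤ N) :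
    2 * |g j₁ - g j₂| - 2 * |g j₀ - g j₃| ≤
      (∑ j ∈ Finset.range N, |g j - g (j + 1)|) - |g 0 - g N| := by
  wlog h₁₂ : j₁ ≤ j₂ generalizing j₁ j₂
  · rw [abs_sub_comm]
    exact this h₀₂ h₀₁ h₂₃ h₁₃ (le_of_not_ge h₁₂)
  have hj₂N := h₂₃.trans h₃
  have hj₁N := h₁₂.trans hj₂N
  have v₀ := abs_sub_add_sum_le_sum g (Nat.zero_le j₀) (h₀₁.trans hj₁N)
  have v₁ := abs_sub_add_sum_le_sum g h₀₁ hj₁N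
  have v₂ := abs_sub_add_sum_le_sum g h₁₂ hj₂N
  have v₃ := abs_sub_add_sum_le_sum g h₂₃ h₃
  have v₄ : |g j₃ - g N| ≤ ∑ j ∈ Finset.Ico j₃ N, |g j - g (j + 1)| := by
    simpa using abs_sub_add_sum_le_sum g h₃ le_rfl
  rw [Finset.range_eq_Ico]
  have h0N := abs_sub_le (g 0) (g j₀) (g N)
  have h0N' := abs_sub_le (g j₀) (g j₃) (g N)
  have h12 := abs_sub_le (g j₁) (g j₀) (g j₂)
  have h12' := abs_sub_le (g j₀) (g j₃) (g j₂)
  rw [abs_sub_comm (g j₁) (g j₀), abs_sub_comm (g j₃) (g j₂)] at *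
  linarith

theorem sub_sub_le_sum_abs_sub_of_abs_sub_le (g : ℕ → ℝ) {N j₀ j₁ j₂ j₃ : ℕ} (h₀₁ : j₀ ≤ j₁)
    (h₀₂ : j₀ ≤ j₂) (h₁₃ : j₁ ≤ j₃) (h₂₃ : j₂ ≤ j₃) (h₃ : j₃ ≤ N) {x y z η : ℝ}
    (hx : |g j₁ - x| ≤ η) (hy : |g j₂ - y| ≤ η) (hz₀ : |g j₀ - z| ≤ η) (hz₃ : |g j₃ - z| ≤ η) :
    2 * (x - y) - 8 * η ≤ (∑ j ∈ Finset.range N, |g j - g (j + 1)|) - |g 0 - g N| := by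
  have h := two_mul_abs_sub_sub_le_sum_abs_sub g h₀₁ h₀₂ h₁₃ h₂₃ h₃
  rw [abs_le] at hx hy hz₀ hz₃
  have h₁₂ := le_abs_self (g j₁ - g j₂)
  have h₀₃ : |g j₀ - g j₃| ≤ 2 * η := abs_le.mpr ⟨by linarith, by linarith⟩
  linarith

theorem exists_forall_add_mul_log_add_mul_div_le {a : ℝ} (ha : 0 < a) (K q b : ℝ) :
    ∃ M : ℝ, 1 ≤ M ∧ ∀ r ≥ M, ∀ N ≥ M, K + q * Real.log r + b * (r / N) ≤ a * r := by
  have hlo : (fun r => K + q * Real.log r) =o[atTop] id :=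
    (Asymptotics.isLittleO_const_id_atTop K).add (Real.isLittleO_log_id_atTop.const_mul_left q)
  obtain ⟨M₁, hM₁⟩ := eventually_atTop.mp ((hlo.bound (half_pos ha)).and (eventually_ge_atTop 0))
  refine ⟨max M₁ (max 1 (2 * b / a)), le_max_of_le_right (le_max_left _ _), fun r hr N hN => ?_⟩
  obtain ⟨hlog, hr0⟩ := hM₁ r (le_of_max_le_left hr)
  rw [Real.norm_eq_abs, id, Real.norm_eq_abs, abs_of_nonneg hr0] at hlog
  have hN1 : 1 ≤ N := le_trans (le_max_of_le_right (le_max_left _ _)) hN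
  have hbN : 2 * b ≤ a * N := by
    rw [← div_le_iff₀' ha]
    exact le_trans (le_max_of_le_right (le_max_right _ _)) hN
  have hdiv : b * (r / N) ≤ a / 2 * r := by
    rw [mul_div_assoc', div_le_iff₀ (by linarith)]
    nlinarith
  linarith [le_abs_self (K + q * Real.log r)]

theorem natFloor_mul_div_le_and_abs_sub_le {r t : ℝ} {N : ℕ} (hr : 0 < r) (hN : 0 < N)
    (ht : t ∈ Icc 0 r) :
    ⌊t * N / r⌋₊ ≤ N ∧ |(⌊t * N / r⌋₊ : ℝ) * r / N - t| ≤ r / N := by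
  have hN' : (0 : ℝ) < N := Nat.cast_pos.mpr hN
  set x := t * N / r
  have hx0 : 0 ≤ x := by have := ht.1; positivity
  have hxN : x ≤ N := by
    rw [div_le_iff₀ hr]
    nlinarith [ht.2]
  refine ⟨Nat.floor_le_of_le hxN, ?_⟩
  have hsub : (⌊x⌋₊ : ℝ) * r / N - t = (⌊x⌋₊ - x) * (r / N) := by
    simp only [x]
    field_simp
  rw [hsub, abs_mul, abs_of_pos (div_pos hr hN')]
  refine mul_le_of_le_one_left (div_pos hr hN').le (abs_le.mpr ⟨?_, ?_⟩)
  · linarith [Nat.lt_floor_add_one x]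
  · linarith [Nat.floor_le hx0]

theorem exists_le_two_pow_and_le_logb_add_one {r : ℝ} (hr : 1 ≤ r) :
    ∃ m : ℕ, r ≤ 2 ^ m ∧ (m : ℝ) ≤ Real.logb 2 r + 1 := by
  refine ⟨⌈Real.logb 2 r⌉₊, ?_, (Nat.ceil_lt_add_one (Real.logb_nonneg one_lt_two hr)).le⟩
  calc r = (2 : ℝ) ^ Real.logb 2 r := (Real.rpow_logb two_pos (by norm_num) (by linarith)).symm
    _ ≤ (2 : ℝ) ^ (⌈Real.logb 2 r⌉₊ : ℝ) :=
      Real.rpow_le_rpow_of_exponent_le one_le_two (Nat.le_ceil _)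
    _ = 2 ^ ⌈Real.logb 2 r⌉₊ := Real.rpow_natCast 2 _

section HoroProd

variable {X Y : Type*} [MetricSpace X] [MetricSpace Y] {HX : HoroSpace X} {HY : HoroSpace Y}

/-- The witnesses `i` and `j` are the highest and the lowest points of the chain. -/
theorem HoroMetric.exists_height_gap_of_chain (P : HoroMetric HX HY) (p : ℕ → HoroProd HX HY)
    {n m : ℕ} (hn : 1 ≤ n) (hnm : n ≤ 2 ^ m) {D : ℝ}
    (hD : ∀ i < n, P.d (p i) (p (i + 1)) ≤ D) :
    ∃ i ≤ n, ∃ j ≤ n, dist (p 0).1.1 (p n).1.1 + dist (p 0).1.2 (p n).1.2 ≤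
      2 * (HX.height (p i).1.1 - HX.height (p j).1.1) + 4 * D + 2 * (HX.δ + HY.δ) * m := by
  have h0 : (0 : ℕ) ∈ Finset.range (n + 1) := Finset.mem_range.mpr n.succ_pos
  obtain ⟨i, hi, hmax⟩ :=
    (Finset.range (n + 1)).exists_max_image (fun i => HX.height (p i).1.1) ⟨0, h0⟩
  obtain ⟨j, hj, hmin⟩ :=
    (Finset.range (n + 1)).exists_min_image (fun i => HX.height (p i).1.1) ⟨0, h0⟩
  have hstep : ∀ l < n, dist (p l).1.1 (p (l + 1)).1.1 + dist (p l).1.2 (p (l + 1)).1.2 ≤ 2 * D :=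
    fun l hl => (P.two_d_ge _ _).trans (by linarith [hD l hl])
  have hY : ∀ q : HoroProd HX HY, HY.height q.1.2 = -HX.height q.1.1 := fun q => by
    linarith [q.2]
  have hXchain := HX.gromovProduct_chain hn hnm (fun l => (p l).1.1)
    (S := -HX.height (p i).1.1 - D) fun l hl => by
      have hpl := hmax l (Finset.mem_range.mpr (by omega))
      have hpl' := hmax (l + 1) (Finset.mem_range.mpr (by omega))
      have hdY := dist_nonneg (x := (p l).1.2) (y := (p (l + 1)).1.2)
      have := hstep l hl
      simp only [HoroSpace.gromovProduct]
      linarith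
  have hYchain := HY.gromovProduct_chain hn hnm (fun l => (p l).1.2)
    (S := HX.height (p j).1.1 - D) fun l hl => by
      have hpl := hmin l (Finset.mem_range.mpr (by omega))
      have hpl' := hmin (l + 1) (Finset.mem_range.mpr (by omega))
      have hdX := dist_nonneg (x := (p l).1.1) (y := (p (l + 1)).1.1)
      have := hstep l hl
      simp only [HoroSpace.gromovProduct, hY]
      linarith
  refine ⟨i, Nat.lt_succ_iff.mp (Finset.mem_range.mp hi), j,
    Nat.lt_succ_iff.mp (Finset.mem_range.mp hj), ?_⟩
  simp only [HoroSpace.gromovProduct, hY] at hXchain hYchain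
  linarith

theorem HoroMetric.exists_height_gap (P : HoroMetric HX HY) {k c t₁ t₂ : ℝ} {m : ℕ}
    (hk : 0 ≤ k) {α : ℝ → HoroProd HX HY} (hqg : IsQGOn P.d k c α (Icc t₁ t₂)) (ht : t₁ < t₂)
    (hm : t₂ - t₁ ≤ 2 ^ m) :
    ∃ v ∈ Icc t₁ t₂, ∃ w ∈ Icc t₁ t₂,
      k⁻¹ * (t₂ - t₁) - 5 * c - P.C - 4 * k - 2 * (HX.δ + HY.δ) * m ≤
        2 * (HX.height (α v).1.1 - HX.height (α w).1.1) := by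
  set L := t₂ - t₁
  set n := ⌈L⌉₊
  have hL : 0 < L := sub_pos.mpr ht
  have hn : 1 ≤ n := Nat.one_le_iff_ne_zero.mpr (Nat.ceil_pos.mpr hL).ne'
  have hn' : (0 : ℝ) < n := by exact_mod_cast hn
  have hnm : n ≤ 2 ^ m := Nat.ceil_le.mpr (by exact_mod_cast hm)
  have hstep : L / n ≤ 1 := (div_le_one hn').mpr (Nat.le_ceil L)
  set u : ℕ → ℝ := fun i => t₁ + i * (L / n)
  have hu : ∀ i ≤ n, u i ∈ Icc t₁ t₂ := fun i hi => by
    have hle : (i : ℝ) * (L / n) ≤ n * (L / n) := by gcongr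
    have hnonneg : 0 ≤ (i : ℝ) * (L / n) := by positivity
    rw [mul_div_cancel₀ L hn'.ne'] at hle
    constructor <;> simp only [u, L] at hle hnonneg ⊢ <;> linarith
  have hdu : ∀ i < n, P.d (α (u i)) (α (u (i + 1))) ≤ k + c := fun i hi => by
    have hd := (hqg _ (hu i hi.le) _ (hu (i + 1) hi)).2
    have hdiff : u (i + 1) - u i = L / n := by simp only [u]; push_cast; ring
    rw [abs_sub_comm, hdiff, abs_of_pos (by positivity)] at hd
    linarith [mul_le_of_le_one_right hk hstep]
  obtain ⟨i, hi, j, hj, hgap⟩ := P.exists_height_gap_of_chain (fun i => α (u i)) hn hnm hdu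
  refine ⟨u i, hu i hi, u j, hu j hj, ?_⟩
  have hu0 : u 0 = t₁ := by simp [u]
  have hun : u n = t₂ := by simp only [u]; rw [mul_div_cancel₀ L hn'.ne']; ring
  simp only [hu0, hun] at hgap
  have hlow := (hqg t₁ ⟨le_rfl, ht.le⟩ t₂ ⟨ht.le, le_rfl⟩).1
  rw [abs_sub_comm, abs_of_pos hL] at hlow
  have happrox := (abs_le.mp (P.approx (α t₁) (α t₂))).2
  linarith [abs_nonneg (HX.height (α t₁).1.1 - HX.height (α t₂).1.1)]

theorem HoroMetric.natFloor_le_and_abs_height_sub_le (P : HoroMetric HX HY) {k c r t : ℝ}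
    {N : ℕ} (hk : 0 ≤ k) {α : ℝ → HoroProd HX HY} (hqg : IsQGOn P.d k c α (Icc 0 r))
    (hr : 0 < r) (hN : 0 < N) (ht : t ∈ Icc 0 r) :
    ⌊t * N / r⌋₊ ≤ N ∧
      |HX.height (α (⌊t * N / r⌋₊ * r / N)).1.1 - HX.height (α t).1.1| ≤ k * (r / N) + c := by
  obtain ⟨hidx, hgrid⟩ := natFloor_mul_div_le_and_abs_sub_le hr hN ht
  have hmem : (⌊t * N / r⌋₊ : ℝ) * r / N ∈ Icc 0 r := by
    refine ⟨by positivity, ?_⟩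
    rw [div_le_iff₀ (Nat.cast_pos.mpr hN)]
    exact mul_le_mul_of_nonneg_right (by exact_mod_cast hidx) hr.le |>.trans_eq (mul_comm _ _)
  refine ⟨hidx, (P.height_lip _ _).trans ((hqg _ hmem t ht).2.trans ?_)⟩
  gcongr

theorem HoroMetric.two_mul_sub_sub_le_sum_abs_height_sub (P : HoroMetric HX HY)
    {k c r t₁ t₂ v w : ℝ} {N : ℕ} (hk : 0 ≤ k) {α : ℝ → HoroProd HX HY}
    (hqg : IsQGOn P.d k c α (Icc 0 r)) (hr : 0 < r) (hN : 0 < N) (ht₁ : 0 ≤ t₁) (ht₂ : t₂ ≤ r)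
    (hv : v ∈ Icc t₁ t₂) (hw : w ∈ Icc t₁ t₂)
    (hz : HX.height (α t₁).1.1 = HX.height (α t₂).1.1) :
    2 * (HX.height (α v).1.1 - HX.height (α w).1.1) - 8 * (k * (r / N) + c) ≤
      (∑ j ∈ Finset.range N,
          |HX.height (α (j * r / N)).1.1 - HX.height (α ((j + 1) * r / N)).1.1|) -
        |HX.height (α 0).1.1 - HX.height (α r).1.1| := by
  have hsub : Icc t₁ t₂ ⊆ Icc 0 r := Icc_subset_Icc ht₁ ht₂
  have ht : t₁ ≤ t₂ := hv.1.trans hv.2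
  obtain ⟨-, e₀⟩ := P.natFloor_le_and_abs_height_sub_le hk hqg hr hN (hsub (left_mem_Icc.2 ht))
  obtain ⟨-, e₁⟩ := P.natFloor_le_and_abs_height_sub_le hk hqg hr hN (hsub hv)
  obtain ⟨-, e₂⟩ := P.natFloor_le_and_abs_height_sub_le hk hqg hr hN (hsub hw)
  obtain ⟨h₃, e₃⟩ := P.natFloor_le_and_abs_height_sub_le hk hqg hr hN (hsub (right_mem_Icc.2 ht))
  rw [← hz] at e₃
  have hidx : Monotone fun t : ℝ => ⌊t * N / r⌋₊ := fun s t hst => Nat.floor_le_floor (by gcongr)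
  have h := sub_sub_le_sum_abs_sub_of_abs_sub_le (fun j : ℕ => HX.height (α (j * r / N)).1.1)
    (hidx hv.1) (hidx hw.1) (hidx hv.2) (hidx hw.2) h₃ e₁ e₂ e₀ e₃
  simpa only [Nat.cast_add, Nat.cast_one, Nat.cast_zero, zero_mul, zero_div,
    mul_div_cancel_left₀ r (Nat.cast_pos.mpr hN).ne'] using h

end HoroProd

theorem statement_9_general {X Y : Type*} [MetricSpace X] [MetricSpace Y]
    (HX : HoroSpace X) (HY : HoroSpace Y) (P : HoroMetric HX HY)
    (k c : ℝ) (hk : 1 ≤ k) :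
    ∃ c₀ : ℝ, 0 < c₀ ∧ ∀ ε : ℝ, 0 < ε → ∃ M : ℝ, 0 < M ∧
      ∀ r : ℝ, M ≤ r → ∀ N : ℕ, M ≤ (N : ℝ) →
        ∀ α : ℝ → HoroProd HX HY,
          ContOnD P.d α (Icc 0 r) →
          IsQGOn P.d k c α (Icc 0 r) →
          ¬ EpsMonotoneOn (fun p : HoroProd HX HY => HX.height p.1.1) ε α 0 r →
          c₀ * ε * r ≤
            (∑ j ∈ Finset.range N,
                |HX.height ((α ((j : ℝ) * r / (N : ℝ))).1.1) -
                  HX.height ((α (((j : ℝ) + 1) * r / (N : ℝ))).1.1)|) -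
              |HX.height ((α 0).1.1) - HX.height ((α r).1.1)| := by
  have hk0 : 0 < k := by linarith
  have hΔ : 0 ≤ HX.δ + HY.δ := add_nonneg HX.δ_nonneg HY.δ_nonneg
  refine ⟨1 / (2 * k), by positivity, fun ε hε => ?_⟩
  obtain ⟨M, hM1, hM⟩ := exists_forall_add_mul_log_add_mul_div_le (a := ε / (2 * k))
    (by positivity) (13 * c + P.C + 4 * k + 2 * (HX.δ + HY.δ))
    (2 * (HX.δ + HY.δ) / Real.log 2) (8 * k)
  refine ⟨M, by linarith, fun r hr N hN α _ hqg hmono => ?_⟩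
  have hr0 : 0 < r := by linarith
  have hN0 : 0 < N := by exact_mod_cast (show (0 : ℝ) < N by linarith)
  obtain ⟨t₁, ht₁, t₂, ht₂, hz, hfar⟩ := exists_sub_gt_of_not_epsMonotoneOn hmono
  rw [sub_zero] at hfar
  obtain ⟨m, hrm, hm⟩ := exists_le_two_pow_and_le_logb_add_one (hM1.trans hr)
  obtain ⟨v, hv, w, hw, hgap⟩ := P.exists_height_gap hk0.le
    (hqg.mono (Icc_subset_Icc ht₁.1 ht₂.2)) (by nlinarith) (by linarith [ht₁.1, ht₂.2])
  have hexcess := P.two_mul_sub_sub_le_sum_abs_height_sub hk0.le hqg hr0 hN0 ht₁.1 ht₂.2 hv hw hz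
  have hkL : k⁻¹ * (ε * r) ≤ k⁻¹ * (t₂ - t₁) := by gcongr
  have hΔm : 2 * (HX.δ + HY.δ) * m ≤
      2 * (HX.δ + HY.δ) + 2 * (HX.δ + HY.δ) / Real.log 2 * Real.log r :=
    calc _ ≤ 2 * (HX.δ + HY.δ) * (Real.logb 2 r + 1) := by gcongr
      _ = _ := by rw [Real.logb]; ring
  have hMr := hM r hr N hN
  have hident : 1 / (2 * k) * ε * r = k⁻¹ * (ε * r) - ε / (2 * k) * r := by field_simp; ring
  rw [hident]
  linarith

/-- A continuous `(k,c)`-quasigeodesic segment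
`α : [0,r] → X ⋈ Y` which is not `ε`-monotone accumulates an extra `c₀·ε·r` of
height variation along any subdivision into `N` equal pieces, for `r, N` large
enough (`≥ M`, with `M` depending only on `k,c,X⋈Y,ε` and `c₀` only on
`k,c,X⋈Y`). -/
theorem statement_9 {X Y : Type*} [MetricSpace X] [MetricSpace Y]
    (HX : HoroSpace X) (HY : HoroSpace Y) (P : HoroMetric HX HY)
    (k c : ℝ) (hk : 1 ≤ k) (hc : 0 ≤ c) :
    ∃ c₀ : ℝ, 0 < c₀ ∧ ∀ ε : ℝ, 0 < ε → ∃ M : ℝ, 0 < M ∧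
      ∀ r : ℝ, M ≤ r → ∀ N : ℕ, M ≤ (N : ℝ) →
        ∀ α : ℝ → HoroProd HX HY,
          ContOnD P.d α (Icc 0 r) →
          IsQGOn P.d k c α (Icc 0 r) →
          ¬ EpsMonotoneOn (fun p : HoroProd HX HY => HX.height p.1.1) ε α 0 r →
          c₀ * ε * r ≤
            (∑ j ∈ Finset.range N,
                |HX.height ((α ((j : ℝ) * r / (N : ℝ))).1.1) -
                  HX.height ((α (((j : ℝ) + 1) * r / (N : ℝ))).1.1)|) -
              |HX.height ((α 0).1.1) - HX.height ((α r).1.1)| :=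
  statement_9_general HX HY P k c hk
end
end
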